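/- arXiv:1005.0488 — 4 statements merged into one kernel-verified Lean document; each statement's English description precedes it below -/
import Mathlib

section
/- Let n ≥ 1 and m ≥ n be integers, let U = {u_1,…,u_n}, V = {v_1,…,v_n}, W = {w_1,…,w_n} be three pairwise disjoint sets, and let T = {T_1,…,T_m} be a collection of m triples in U × V × W. Let G' be the graph with vertex set {û, v̂, ŵ, t̂} ∪ {u_i : 1 ≤ i ≤ n} ∪ {v_i : 1 ≤ i ≤ n} ∪ {w_i : 1 ≤ i ≤ n} ∪ {t_i : 1 ≤ i ≤ m} ∪ {a_j : 1 ≤ j ≤ m−n}, and edge set consisting of: û u_i, v̂ v_i, ŵ w_i for 1 ≤ i ≤ n; t̂ t_i for 1 ≤ i ≤ m; û a_j, v̂ a_j, ŵ a_j for 1 ≤ j ≤ m−n; t_i a_j for all 1 ≤ i ≤ m, 1 ≤ j ≤ m−n; and t_i u_j, t_i v_j, t_i w_j whenever u_j ∈ T_i, v_j ∈ T_i, w_j ∈ T_i respectively. Let S = {û, v̂, ŵ, t̂}. Then κ_{G'}(S) ≥ m if and only if there is a subset M of T with |M| = n such that whenever (u,v,w) and (u',v',w') are distinct triples in M, u ≠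 u', v ≠ v' and w ≠ w' (i.e., M is a perfect 3-dimensional matching). -/
/-!
Trees of an internally disjoint family meet only in `S`, so every vertex outside `S` lies in at
most one of them. Each tree contains a neighbour `t_l` of `t̂`, so the `m` trees take the `m`
vertices `t_l` one each, and at most `m - n` of them can contain one of the `m - n` vertices `a_j`.
A tree avoiding every `a_j` can only reach `û`, `v̂`, `ŵ` from its own `t_l` through the elements
of `T_l`; these elements are private to the tree, so the triples of `n` such trees form a perfect
matching. Conversely, a matched triple `T_i` gives the tree `t̂ t_i` plus the paths `t_i x x̂` for
the elements `x` of `T_i`, and each remaining triple gets its own `a_j` and the tree `t̂ t_i a_j`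
plus `a_j û`, `a_j v̂`, `a_j ŵ`. As `S` is independent, trees meeting only in `S` are
automatically edge-disjoint.
-/

open SimpleGraph

/-- `F` is an internally disjoint family of trees connecting `S` in `G`:
each member is a subgraph of `G` that is a tree containing all of `S`, the members are
pairwise edge-disjoint, and any two distinct members intersect exactly in `S`. -/
def IsIDTrees {V : Type*} (G : SimpleGraph V) (S : Set V) {ι : Type*} (F : ι → G.Subgraph) : Prop :=
  (∀ i, S ⊆ (F i).verts ∧ ((F i).coe).IsTree) ∧
    ∀ i j, i ≠ j → (F i).verts ∩ (F j).verts = S ∧ Disjoint (F i).edgeSet (F j).edgeSet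

/-- Vertices of the graph `G'` built from a 3-dimensional-matching instance with
`|U| = |V| = |W| = n` and `m` triples. -/
inductive DMVert (n m : ℕ) where
  | uhat | vhat | what | that
  | u (i : Fin n) | v (i : Fin n) | w (i : Fin n)
  | t (i : Fin m) | a (j : Fin (m - n))

/-- The base (asymmetric) adjacency relation of `G'`; a triple `T i` is recorded by the indices
of its three coordinates in `U`, `V` and `W`. -/
def dmRel {n m : ℕ} (T : Fin m → Fin n × Fin n × Fin n) :
    DMVert n m → DMVert n m → Prop
  | .uhat, .u _ => True
  | .vhat, .v _ => True
  | .what, .w _ => True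
  | .that, .t _ => True
  | .uhat, .a _ => True
  | .vhat, .a _ => True
  | .what, .a _ => True
  | .t _, .a _ => True
  | .t i, .u j => (T i).1 = j
  | .t i, .v j => (T i).2.1 = j
  | .t i, .w j => (T i).2.2 = j
  | _, _ => False

/-- The graph `G'` of the 3-DM reduction. -/
def dmGraph {n m : ℕ} (T : Fin m → Fin n × Fin n × Fin n) : SimpleGraph (DMVert n m) :=
  SimpleGraph.fromRel (dmRel T)

/-- The set `S = {û, v̂, ŵ, t̂}`. -/
def dmS (n m : ℕ) : Set (DMVert n m) :=
  {DMVert.uhat, DMVert.vhat, DMVert.what, DMVert.that}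

namespace SimpleGraph.Subgraph

variable {V : Type*} {G : SimpleGraph V} {H : G.Subgraph}

theorem Preconnected.mem_of_adj_closed (hH : H.Preconnected) {X : Set V}
    (hX : ∀ ⦃x y⦄, x ∈ X → H.Adj x y → y ∈ X) {x y : V} (hxX : x ∈ X)
    (hx : x ∈ H.verts) (hy : y ∈ H.verts) : y ∈ X := by
  obtain ⟨p⟩ := hH.coe ⟨x, hx⟩ ⟨y, hy⟩
  suffices ∀ {a b : H.verts} (p : H.coe.Walk a b), a.1 ∈ X → b.1 ∈ X from this p hxX
  intro a b p
  induction p with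
  | nil => exact id
  | cons h _ ih => exact fun ha => ih (hX ha h)

theorem Preconnected.exists_adj (hH : H.Preconnected) {x y : V} (hx : x ∈ H.verts)
    (hy : y ∈ H.verts) (hxy : x ≠ y) : ∃ z, H.Adj x z := by
  by_contra! h
  refine hxy (hH.mem_of_adj_closed (X := {x}) ?_ rfl hx hy).symm
  rintro a b rfl hab
  exact absurd hab (h b)

theorem isTree_coe_of_isAcyclic_spanningCoe (hc : H.Connected)
    (ha : H.spanningCoe.IsAcyclic) : H.coe.IsTree :=
  ⟨hc.coe, ha.comap ⟨Subtype.val, id⟩ Subtype.val_injective⟩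

theorem isAcyclic_spanningCoe_singletonSubgraph (v : V) :
    (G.singletonSubgraph v).spanningCoe.IsAcyclic :=
  isAcyclic_bot.anti fun _ _ h => h

theorem connected_sup_subgraphOfAdj (hH : H.Connected) {u v : V} (hu : u ∈ H.verts)
    (huv : G.Adj u v) : (H ⊔ G.subgraphOfAdj huv).Connected :=
  connected_sup hH.preconnected (subgraphOfAdj_connected huv).preconnected ⟨u, hu, by simp⟩

/-- A new vertex is isolated in `H.spanningCoe`, so the new edge joins two components. -/
theorem isAcyclic_spanningCoe_sup_subgraphOfAdj (hH : H.spanningCoe.IsAcyclic) {u v : V}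
    (hv : v ∉ H.verts) (huv : G.Adj u v) : (H ⊔ G.subgraphOfAdj huv).spanningCoe.IsAcyclic := by
  rw [sup_spanningCoe, spanningCoe_subgraphOfAdj]
  refine hH.sup_edge_of_not_reachable fun ⟨p⟩ => ?_
  cases p.reverse with
  | nil => exact huv.ne rfl
  | cons h _ => exact hv h.fst_mem

end SimpleGraph.Subgraph

section IDTrees

variable {V ι : Type*} {G : SimpleGraph V} {S : Set V} {F : ι → G.Subgraph}

theorem IsIDTrees.eq_of_mem_verts (hF : IsIDTrees G S F) {x : V} (hx : x ∉ S) {i j : ι}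
    (hi : x ∈ (F i).verts) (hj : x ∈ (F j).verts) : i = j := by
  by_contra hij
  exact hx ((hF.2 i j hij).1 ▸ ⟨hi, hj⟩)

/-- Edge-disjointness comes for free when `S` is independent: a common edge would have both
ends in the common vertex set `S`. -/
theorem isIDTrees_of_verts_eq_union (hS : G.IsIndepSet S) (P : ι → Set V)
    (hP : Pairwise fun i j => Disjoint (P i) (P j)) (hverts : ∀ i, (F i).verts = S ∪ P i)
    (htree : ∀ i, (F i).coe.IsTree) : IsIDTrees G S F := by
  have hinter : ∀ i j, i ≠ j → (F i).verts ∩ (F j).verts = S := fun i j hij => by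
    rw [hverts, hverts, ← Set.union_inter_distrib_left, (hP hij).inter_eq, Set.union_empty]
  refine ⟨fun i => ⟨hverts i ▸ Set.subset_union_left, htree i⟩,
    fun i j hij => ⟨hinter i j hij, Set.disjoint_left.2 fun e hi hj => ?_⟩⟩
  induction e using Sym2.ind with
  | _ x y =>
    have hx : x ∈ S := hinter i j hij ▸ ⟨hi.fst_mem, hj.fst_mem⟩
    have hy : y ∈ S := hinter i j hij ▸ ⟨hi.snd_mem, hj.snd_mem⟩
    exact hS hx hy ((F i).adj_sub hi).ne ((F i).adj_sub hi)

theorem IsIDTrees.preconnected (hF : IsIDTrees G S F) (i : ι) : (F i).Preconnected :=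
  ⟨(hF.1 i).2.connected.preconnected⟩

end IDTrees

namespace DMVert

variable {n m : ℕ}

/-- Coordinate `c : Fin 3` stands for `U, V, W`, so that the three coordinates can be handled by
one argument. -/
def hat : Fin 3 → DMVert n m := ![uhat, vhat, what]

def elem : Fin 3 → Fin n → DMVert n m := ![u, v, w]

end DMVert

def tripleCoord {n : ℕ} (c : Fin 3) (x : Fin n × Fin n × Fin n) : Fin n :=
  ![x.1, x.2.1, x.2.2] c

section Adjacency

variable {n m : ℕ} (T : Fin m → Fin n × Fin n × Fin n)

theorem isIndepSet_dmS : (dmGraph T).IsIndepSet (dmS n m) := by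
  rintro x (rfl | rfl | rfl | rfl) y (rfl | rfl | rfl | rfl) <;> simp [dmGraph, dmRel]

variable {T}

theorem DMVert.elem_notMem_dmS (c : Fin 3) (j : Fin n) : DMVert.elem c j ∉ dmS n m := by
  fin_cases c <;> simp [dmS, DMVert.elem]

theorem dmGraph_adj_that {x : DMVert n m} (h : (dmGraph T).Adj .that x) : ∃ l, x = .t l := by
  cases x <;> simp_all [dmGraph, dmRel]

theorem dmGraph_adj_hat {c : Fin 3} {x : DMVert n m} (h : (dmGraph T).Adj (.hat c) x) :
    (∃ j, x = .elem c j) ∨ ∃ j, x = .a j := by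
  fin_cases c <;> cases x <;> simp_all [dmGraph, dmRel, DMVert.hat, DMVert.elem]

theorem dmGraph_adj_elem {c : Fin 3} {j : Fin n} {x : DMVert n m}
    (h : (dmGraph T).Adj (.elem c j) x) :
    x = .hat c ∨ ∃ l, x = .t l ∧ tripleCoord c (T l) = j := by
  fin_cases c <;> cases x <;> simp_all [dmGraph, dmRel, DMVert.hat, DMVert.elem, tripleCoord]

end Adjacency

section Forward

variable {n m : ℕ} {T : Fin m → Fin n × Fin n × Fin n}

theorem exists_t_mem_of_preconnected {H : (dmGraph T).Subgraph} (hH : H.Preconnected)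
    (ht : .that ∈ H.verts) (hu : .uhat ∈ H.verts) : ∃ l, .t l ∈ H.verts := by
  obtain ⟨x, hx⟩ := hH.exists_adj ht hu (by simp)
  obtain ⟨l, rfl⟩ := dmGraph_adj_that (H.adj_sub hx)
  exact ⟨l, hx.snd_mem⟩

/-- Otherwise `ĥ` and the elements of coordinate `c` in `H` would be closed under adjacency,
cutting off `t̂`. -/
theorem exists_t_mem_elem_mem_of_preconnected {H : (dmGraph T).Subgraph} (hH : H.Preconnected)
    (c : Fin 3) (hc : .hat c ∈ H.verts) (ht : .that ∈ H.verts) (ha : ∀ j, .a j ∉ H.verts) :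
    ∃ l, .t l ∈ H.verts ∧ .elem c (tripleCoord c (T l)) ∈ H.verts := by
  by_contra! hno
  have hclosed : ∀ ⦃x y⦄, x ∈ insert (.hat c) (Set.range (.elem c)) → H.Adj x y →
      y ∈ insert (.hat c) (Set.range (.elem c)) := by
    rintro x y (rfl | ⟨j, rfl⟩) hxy
    · rcases dmGraph_adj_hat (H.adj_sub hxy) with ⟨j, rfl⟩ | ⟨j, rfl⟩
      · exact Or.inr ⟨j, rfl⟩
      · exact absurd hxy.snd_mem (ha j)
    · rcases dmGraph_adj_elem (H.adj_sub hxy) with rfl | ⟨l, rfl, rfl⟩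
      · exact Or.inl rfl
      · exact absurd hxy.fst_mem (hno l hxy.snd_mem)
  have hthat := hH.mem_of_adj_closed hclosed (Or.inl rfl) hc ht
  fin_cases c <;> simp [DMVert.hat, DMVert.elem] at hthat

variable {F : Fin m → (dmGraph T).Subgraph}

theorem exists_injective_t_mem_iff (hF : IsIDTrees (dmGraph T) (dmS n m) F) :
    ∃ σ : Fin m → Fin m, σ.Injective ∧ ∀ k l, .t l ∈ (F k).verts ↔ l = σ k := by
  have ht_notMem (l : Fin m) : DMVert.t l ∉ dmS n m := by simp [dmS]
  choose σ hσ using fun k => exists_t_mem_of_preconnected (hF.preconnected k)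
    ((hF.1 k).1 (by simp [dmS])) ((hF.1 k).1 (by simp [dmS]))
  have hinj : σ.Injective := fun k k' h =>
    hF.eq_of_mem_verts (ht_notMem _) (hσ k) (h ▸ hσ k')
  refine ⟨σ, hinj, fun k l => ⟨fun hl => ?_, fun h => h ▸ hσ k⟩⟩
  obtain ⟨k', rfl⟩ := (Finite.injective_iff_surjective.1 hinj) l
  rw [hF.eq_of_mem_verts (ht_notMem _) hl (hσ k')]

theorem exists_card_eq_forall_a_notMem (hmn : n ≤ m) (hF : IsIDTrees (dmGraph T) (dmS n m) F) :
    ∃ B : Finset (Fin m), B.card = n ∧ ∀ k ∈ B, ∀ j, .a j ∉ (F k).verts := by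
  classical
  have hA : (Finset.univ.filter fun k => ∃ j, .a j ∈ (F k).verts).card ≤ m - n := by
    simpa using Finset.card_le_card_of_forall_subsingleton (t := Finset.univ)
      (fun k j => DMVert.a j ∈ (F k).verts) (by simp)
      (fun j _ k hk k' hk' => hF.eq_of_mem_verts (by simp [dmS]) hk.2 hk'.2)
  have hsum := Finset.card_filter_add_card_filter_not (s := Finset.univ)
    (fun k => ∃ j, DMVert.a j ∈ (F k).verts)
  simp only [Finset.card_univ, Fintype.card_fin, not_exists] at hsum
  obtain ⟨B, hB, hBcard⟩ := Finset.exists_subset_card_eq (s := Finset.univ.filter fun k =>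
    ∀ j, .a j ∉ (F k).verts) (n := n) (by omega)
  exact ⟨B, hBcard, fun k hk => (Finset.mem_filter.1 (hB hk)).2⟩

theorem exists_perfect_matching_of_isIDTrees (hmn : n ≤ m)
    (hF : IsIDTrees (dmGraph T) (dmS n m) F) :
    ∃ M : Finset (Fin m), M.card = n ∧ ∀ i ∈ M, ∀ j ∈ M, i ≠ j →
      (T i).1 ≠ (T j).1 ∧ (T i).2.1 ≠ (T j).2.1 ∧ (T i).2.2 ≠ (T j).2.2 := by
  classical
  obtain ⟨σ, hσinj, hσ⟩ := exists_injective_t_mem_iff hF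
  obtain ⟨B, hBcard, hBa⟩ := exists_card_eq_forall_a_notMem hmn hF
  have helem : ∀ k ∈ B, ∀ c, .elem c (tripleCoord c (T (σ k))) ∈ (F k).verts := by
    intro k hk c
    obtain ⟨l, hl, hlc⟩ := exists_t_mem_elem_mem_of_preconnected (hF.preconnected k) c
      ((hF.1 k).1 (by fin_cases c <;> simp [dmS, DMVert.hat])) ((hF.1 k).1 (by simp [dmS]))
      (hBa k hk)
    rwa [(hσ k l).1 hl] at hlc
  refine ⟨B.image σ, by rw [Finset.card_image_of_injective _ hσinj, hBcard], ?_⟩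
  simp only [Finset.forall_mem_image]
  intro k hk k' hk' hkk'
  have hne (c : Fin 3) : tripleCoord c (T (σ k)) ≠ tripleCoord c (T (σ k')) := fun hc =>
    hkk' (congrArg σ (hF.eq_of_mem_verts (DMVert.elem_notMem_dmS c _) (helem k hk c)
      (hc ▸ helem k' hk' c)))
  exact ⟨hne 0, hne 1, hne 2⟩

end Forward

section Backward

variable {n m : ℕ} (T : Fin m → Fin n × Fin n × Fin n)

theorem dmGraph_adj_of_dmRel {x y : DMVert n m} (h : dmRel T x y) : (dmGraph T).Adj x y := by
  cases x <;> cases y <;> simp_all [dmGraph, dmRel]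

abbrev dmEdge (x y : DMVert n m)
    (h : (dmGraph T).Adj x y := by
      first
        | exact dmGraph_adj_of_dmRel T (by trivial)
        | exact (dmGraph_adj_of_dmRel T (by trivial)).symm) :
    (dmGraph T).Subgraph :=
  (dmGraph T).subgraphOfAdj h

def matchedTree (i : Fin m) : (dmGraph T).Subgraph :=
  (dmGraph T).singletonSubgraph (.t i) ⊔ dmEdge T (.t i) .that ⊔
    dmEdge T (.t i) (.u (T i).1) ⊔ dmEdge T (.t i) (.v (T i).2.1) ⊔
    dmEdge T (.t i) (.w (T i).2.2) ⊔ dmEdge T (.u (T i).1) .uhat ⊔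
    dmEdge T (.v (T i).2.1) .vhat ⊔ dmEdge T (.w (T i).2.2) .what

def unmatchedTree (i : Fin m) (j : Fin (m - n)) : (dmGraph T).Subgraph :=
  (dmGraph T).singletonSubgraph (.a j) ⊔ dmEdge T (.a j) .uhat ⊔ dmEdge T (.a j) .vhat ⊔
    dmEdge T (.a j) .what ⊔ dmEdge T (.a j) (.t i) ⊔ dmEdge T (.t i) .that

variable {T}

theorem matchedTree_isTree (i : Fin m) : (matchedTree T i).coe.IsTree := by
  refine Subgraph.isTree_coe_of_isAcyclic_spanningCoe ?_ ?_
  · repeat' apply Subgraph.connected_sup_subgraphOfAdj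
    all_goals first | exact Subgraph.singletonSubgraph_connected | simp
  · repeat' apply Subgraph.isAcyclic_spanningCoe_sup_subgraphOfAdj
    all_goals first | exact Subgraph.isAcyclic_spanningCoe_singletonSubgraph _ | simp

theorem unmatchedTree_isTree (i : Fin m) (j : Fin (m - n)) : (unmatchedTree T i j).coe.IsTree := by
  refine Subgraph.isTree_coe_of_isAcyclic_spanningCoe ?_ ?_
  · repeat' apply Subgraph.connected_sup_subgraphOfAdj
    all_goals first | exact Subgraph.singletonSubgraph_connected | simp
  · repeat' apply Subgraph.isAcyclic_spanningCoe_sup_subgraphOfAdj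
    all_goals first | exact Subgraph.isAcyclic_spanningCoe_singletonSubgraph _ | simp

theorem matchedTree_verts (i : Fin m) :
    (matchedTree T i).verts = dmS n m ∪ {.t i, .u (T i).1, .v (T i).2.1, .w (T i).2.2} := by
  ext x
  simp [matchedTree, dmS]
  tauto

theorem unmatchedTree_verts (i : Fin m) (j : Fin (m - n)) :
    (unmatchedTree T i j).verts = dmS n m ∪ {.t i, .a j} := by
  ext x
  simp [unmatchedTree, dmS]
  tauto

theorem exists_isIDTrees_of_perfect_matching (M : Finset (Fin m)) (hM : M.card = n)
    (hMT : ∀ i ∈ M, ∀ j ∈ M, i ≠ j →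
      (T i).1 ≠ (T j).1 ∧ (T i).2.1 ≠ (T j).2.1 ∧ (T i).2.2 ≠ (T j).2.2) :
    ∃ F : Fin m → (dmGraph T).Subgraph, IsIDTrees (dmGraph T) (dmS n m) F := by
  classical
  let e : ↥Mᶜ ≃ Fin (m - n) := Fintype.equivFinOfCardEq (by simp [hM])
  let F k :=
    if h : k ∈ M then matchedTree T k else unmatchedTree T k (e ⟨k, Finset.mem_compl.2 h⟩)
  let P k : Set (DMVert n m) := if h : k ∈ M then {.t k, .u (T k).1, .v (T k).2.1, .w (T k).2.2}
    else {.t k, .a (e ⟨k, Finset.mem_compl.2 h⟩)}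
  refine ⟨F, isIDTrees_of_verts_eq_union (isIndepSet_dmS T) P ?_ (fun k => ?_) (fun k => ?_)⟩
  · intro k k' hkk'
    by_cases hk : k ∈ M <;> by_cases hk' : k' ∈ M
    · obtain ⟨hu, hv, hw⟩ := hMT k' hk' k hk hkk'.symm
      simp [P, hk, hk', hkk'.symm, hu, hv, hw]
    all_goals simp [P, hk, hk', hkk'.symm]
  · dsimp only [F, P]
    split_ifs
    exacts [matchedTree_verts k, unmatchedTree_verts k _]
  · by_cases hk : k ∈ M
    · rw [show F k = matchedTree T k from dif_pos hk]
      exact matchedTree_isTree k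
    · rw [show F k = unmatchedTree T k _ from dif_neg hk]
      exact unmatchedTree_isTree k _

end Backward

theorem dm_reduction_iff_general (n m : ℕ) (hmn : n ≤ m)
    (T : Fin m → Fin n × Fin n × Fin n) :
    (∃ F : Fin m → (dmGraph T).Subgraph, IsIDTrees (dmGraph T) (dmS n m) F) ↔
      (∃ M : Finset (Fin m), M.card = n ∧
        ∀ i ∈ M, ∀ j ∈ M, i ≠ j →
          (T i).1 ≠ (T j).1 ∧ (T i).2.1 ≠ (T j).2.1 ∧ (T i).2.2 ≠ (T j).2.2) :=
  ⟨fun ⟨_, hF⟩ => exists_perfect_matching_of_isIDTrees hmn hF,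
    fun ⟨M, hM, hMT⟩ => exists_isIDTrees_of_perfect_matching M hM hMT⟩

/-- `κ_{G'}(S) ≥ m` iff the 3-DM instance has a perfect matching. -/
theorem dm_reduction_iff (n m : ℕ) (hn : 1 ≤ n) (hmn : n ≤ m)
    (T : Fin m → Fin n × Fin n × Fin n) :
    (∃ F : Fin m → (dmGraph T).Subgraph, IsIDTrees (dmGraph T) (dmS n m) F) ↔
      (∃ M : Finset (Fin m), M.card = n ∧
        ∀ i ∈ M, ∀ j ∈ M, i ≠ j →
          (T i).1 ≠ (T j).1 ∧ (T i).2.1 ≠ (T j).2.1 ∧ (T i).2.2 ≠ (T j).2.2) :=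
  dm_reduction_iff_general n m hmn T
end

section
/- Let G be a graph, let S = {v_1, v_2, v_3, v_4} be a 4-subset of V(G), and let k_1 ≥ 5 and k_2 ≥ 2 be integers. Construct G' from G by adding k_1 − 4 new vertices â^1, …, â^{k_1−4} and, for each 1 ≤ i ≤ k_1 − 4, adding k_2 internally disjoint paths â^i a^i_j v_1 (1 ≤ j ≤ k_2) of length two, where all vertices a^i_j are new and pairwise distinct. Let S' = {v_1, v_2, v_3, v_4, â^1, …, â^{k_1−4}}, a k_1-subset of V(G'). Then κ_{G'}(S') ≥ k_2 if and only if κ_G(S) ≥ k_2. -/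
open SimpleGraph

/-- Vertices of the graph `G'` obtained from a graph on `V` by adding `p` new vertices
`â^1, …, â^p` (`ahat i`) and, for each of them, `q` new middle vertices `a^i_j` (`mid i j`). -/
inductive ExtVert (V : Type*) (p q : ℕ) where
  | base (v : V)
  | ahat (i : Fin p)
  | mid (i : Fin p) (j : Fin q)

/-- Base adjacency of `G'`: the edges of `G`, together with the paths
`â^i — a^i_j — v₁` of length two. -/
def extRel {V : Type*} (G : SimpleGraph V) (v1 : V) {p q : ℕ} :
    ExtVert V p q → ExtVert V p q → Prop
  | .base v, .base w => G.Adj v w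
  | .ahat i, .mid i' _ => i = i'
  | .mid _ _, .base v => v = v1
  | _, _ => False

/-- The graph `G'` obtained from `G` by adding, for each new vertex `â^i`, `q` internally
disjoint paths `â^i a^i_j v₁` of length two through new pairwise distinct vertices. -/
def extGraph {V : Type*} (G : SimpleGraph V) (v1 : V) (p q : ℕ) :
    SimpleGraph (ExtVert V p q) :=
  SimpleGraph.fromRel (extRel G v1)

/-- The set `S' = {v₁, v₂, v₃, v₄, â^1, …, â^p}` inside `G'`. -/
def extS {V : Type*} (v1 v2 v3 v4 : V) (p q : ℕ) : Set (ExtVert V p q) :=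
  (ExtVert.base '' {v1, v2, v3, v4}) ∪ Set.range ExtVert.ahat

/-!
A tree of `G'` through `v₁`, cut down to `V(G)`, is still a tree: any excursion of a walk into
the new vertices leaves and re-enters `V(G)` at `v₁`, so contracting every new vertex onto `v₁`
(`ExtVert.proj`) turns walks of the tree into walks of its restriction. Conversely, the `j`-th
tree of `G` extends to `G'` by the paths `â^i a^i_j v₁` for all `i`; a cycle cannot pass through
the leaf `â^i`, hence not through `a^i_j` either, and distinct trees use distinct middle
vertices, so internal disjointness is preserved.
-/

namespace SimpleGraph

variable {X Y : Type*} {G : SimpleGraph X} {H : SimpleGraph Y}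

lemma Reachable.of_adj_imp_eq_or_adj (f : X → Y)
    (hf : ∀ ⦃x y⦄, G.Adj x y → f x = f y ∨ H.Adj (f x) (f y)) {x y : X}
    (h : G.Reachable x y) : H.Reachable (f x) (f y) := by
  rw [reachable_iff_reflTransGen] at h ⊢
  exact h.lift' f fun a b hab => (hf hab).elim (fun e => by rw [Function.onFun, e]) .single

lemma Walk.IsCycle.ne_and_mem_support {u x y z : X} {c : G.Walk u u} (hc : c.IsCycle)
    (hx : x ∈ c.support) (hnbr : ∀ w, G.Adj x w → w = y ∨ w = z) :
    y ≠ z ∧ y ∈ c.support := by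
  have hcard := hc.ncard_neighborSet_toSubgraph_eq_two hx
  have hsub : c.toSubgraph.neighborSet x ⊆ {y, z} := fun w hw => hnbr w (c.toSubgraph.adj_sub hw)
  have hyz : y ≠ z := by
    rintro rfl
    have := Set.ncard_le_ncard hsub (Set.toFinite _)
    simp only [Set.mem_singleton_iff, Set.insert_eq_of_mem, Set.ncard_singleton] at this
    omega
  have heq : c.toSubgraph.neighborSet x = {y, z} :=
    Set.eq_of_subset_of_ncard_le hsub (by rw [Set.ncard_pair hyz, hcard]) (Set.toFinite _)
  have hadj : c.toSubgraph.Adj x y := by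
    rw [← Subgraph.mem_neighborSet, heq]; exact Set.mem_insert _ _
  exact ⟨hyz, c.mem_verts_toSubgraph.mp hadj.snd_mem⟩

lemma IsAcyclic.of_embedding_of_support_subset_range (f : G ↪g H) (hG : G.IsAcyclic)
    (h : ∀ u (c : H.Walk u u), c.IsCycle → ∀ x ∈ c.support, x ∈ Set.range f) :
    H.IsAcyclic := by
  intro u c hc
  refine (f.isoInduceRange.isAcyclic_iff.mp hG) (c.induce (Set.range f) (h u c hc)) ?_
  rwa [← Walk.isCycle_map_iff_of_injective (f := (Embedding.induce (Set.range f)).toHom)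
    Subtype.val_injective, Walk.map_induce]

lemma Subgraph.isAcyclic_coe_comap {f : G →g H} (hf : Function.Injective f) {B : H.Subgraph}
    (hB : B.coe.IsAcyclic) : (B.comap f).coe.IsAcyclic :=
  hB.comap ⟨fun x => ⟨f x, x.2⟩, fun h => h.2⟩
    fun _ _ h => Subtype.ext (hf (congrArg Subtype.val h))

lemma Subgraph.disjoint_edgeSet_comap (f : G →g H) {B B' : H.Subgraph}
    (h : Disjoint B.edgeSet B'.edgeSet) : Disjoint (B.comap f).edgeSet (B'.comap f).edgeSet := by
  refine Set.disjoint_left.mpr fun e he he' => ?_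
  induction e using Sym2.ind with
  | _ x y =>
    exact Set.disjoint_left.mp h (show s(f x, f y) ∈ B.edgeSet from he.2)
      (show s(f x, f y) ∈ B'.edgeSet from he'.2)

end SimpleGraph

namespace ExtVert

variable {V : Type*} {G : SimpleGraph V} {v1 : V} {p q : ℕ}

lemma base_injective : Function.Injective (base : V → ExtVert V p q) :=
  fun _ _ h => by injection h

lemma extGraph_adj {x y : ExtVert V p q} :
    (extGraph G v1 p q).Adj x y ↔ x ≠ y ∧ (extRel G v1 x y ∨ extRel G v1 y x) :=
  fromRel_adj _ _ _

lemma extGraph_adj_base_base {a b : V} :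
    (extGraph G v1 p q).Adj (base a) (base b) ↔ G.Adj a b := by
  rw [extGraph_adj, base_injective.ne_iff]
  exact ⟨fun ⟨_, h⟩ => h.elim id G.adj_symm, fun h => ⟨h.ne, .inl h⟩⟩

def extEmb : G ↪g extGraph G v1 p q where
  toFun := base
  inj' := base_injective
  map_rel_iff' := extGraph_adj_base_base

def proj (v1 : V) : ExtVert V p q → V
  | base a => a
  | _ => v1

end ExtVert

section Restriction

open ExtVert

variable {V : Type*} {G : SimpleGraph V} {v1 : V} {p q : ℕ}

lemma base_proj_mem_verts {B : (extGraph G v1 p q).Subgraph} (hv1 : base v1 ∈ B.verts)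
    {x : ExtVert V p q} (hx : x ∈ B.verts) : base (proj v1 x) ∈ B.verts := by
  cases x <;> assumption

lemma proj_eq_or_adj_comap {B : (extGraph G v1 p q).Subgraph} {x y : ExtVert V p q}
    (h : B.Adj x y) :
    proj v1 x = proj v1 y ∨ (B.comap extEmb.toHom).Adj (proj v1 x) (proj v1 y) := by
  have hxy := extGraph_adj.mp (B.adj_sub h)
  cases x <;> cases y
  case base.base a b => exact .inr ⟨extGraph_adj_base_base.mp (B.adj_sub h), h⟩
  all_goals left; simp_all [extRel, proj]

lemma isTree_coe_comap_extEmb {B : (extGraph G v1 p q).Subgraph} (hv1 : base v1 ∈ B.verts)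
    (hB : B.coe.IsTree) : (B.comap extEmb.toHom).coe.IsTree := by
  refine ⟨?_, Subgraph.isAcyclic_coe_comap base_injective hB.isAcyclic⟩
  have : Nonempty (B.comap extEmb.toHom).verts := ⟨⟨v1, hv1⟩⟩
  refine .mk fun a b => ?_
  let r : B.verts → (B.comap extEmb.toHom).verts := fun x => ⟨proj v1 x, base_proj_mem_verts hv1 x.2⟩
  exact (hB.connected.preconnected ⟨base a, a.2⟩ ⟨base b, b.2⟩).of_adj_imp_eq_or_adj r
    fun x y h => (proj_eq_or_adj_comap h).imp_left Subtype.ext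

theorem IsIDTrees.comap_extEmb {S : Set (ExtVert V p q)} (hS : base v1 ∈ S) {ι : Type*}
    {F : ι → (extGraph G v1 p q).Subgraph} (hF : IsIDTrees (extGraph G v1 p q) S F) :
    IsIDTrees G (base ⁻¹' S) fun i => (F i).comap extEmb.toHom := by
  refine ⟨fun i => ⟨Set.preimage_mono (hF.1 i).1, ?_⟩, fun i j hij => ⟨?_, ?_⟩⟩
  · exact isTree_coe_comap_extEmb ((hF.1 i).1 hS) (hF.1 i).2
  · rw [← (hF.2 i j hij).1]; rfl
  · exact Subgraph.disjoint_edgeSet_comap _ (hF.2 i j hij).2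

end Restriction

section Extension

open ExtVert

variable {V : Type*} {G : SimpleGraph V} {v1 : V} {p q : ℕ}

def extAdj (A : G.Subgraph) (v1 : V) (j : Fin q) : ExtVert V p q → ExtVert V p q → Prop
  | base a, base b => A.Adj a b
  | ahat i, mid i' j' => i = i' ∧ j' = j
  | mid i' j', ahat i => i = i' ∧ j' = j
  | mid _ j', base b => b = v1 ∧ j' = j
  | base b, mid _ j' => b = v1 ∧ j' = j
  | _, _ => False

def extSubgraph (A : G.Subgraph) (hv1 : v1 ∈ A.verts) (j : Fin q) :
    (extGraph G v1 p q).Subgraph where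
  verts := base '' A.verts ∪ Set.range ahat ∪ Set.range (mid · j)
  Adj := extAdj A v1 j
  adj_sub {x y} h := by
    cases x <;> cases y <;> simp only [extAdj] at h
    case base.base => exact extGraph_adj_base_base.mpr (A.adj_sub h)
    all_goals simp_all [extGraph_adj, extRel]
  edge_vert {x y} h := by
    cases x <;> cases y <;> simp only [extAdj] at h
    case base.base => exact .inl (.inl ⟨_, A.edge_vert h, rfl⟩)
    all_goals simp_all
  symm := ⟨fun x y h => by
    cases x <;> cases y <;> simp only [extAdj] at h ⊢
    case base.base => exact A.adj_symm h
    all_goals simp_all⟩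

variable {A : G.Subgraph} {hv1 : v1 ∈ A.verts} {j : Fin q}

@[simp]
lemma base_mem_extSubgraph {a : V} :
    (base a : ExtVert V p q) ∈ (extSubgraph A hv1 j).verts ↔ a ∈ A.verts := by
  simp [extSubgraph, base_injective.eq_iff]

@[simp]
lemma ahat_mem_extSubgraph {i : Fin p} : ahat i ∈ (extSubgraph A hv1 j).verts := by
  simp [extSubgraph]

@[simp]
lemma mid_mem_extSubgraph {i : Fin p} {j' : Fin q} :
    mid i j' ∈ (extSubgraph A hv1 j).verts ↔ j' = j := by
  simp [extSubgraph, eq_comm]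

lemma eq_mid_of_extAdj_ahat {i : Fin p} {w : ExtVert V p q} (h : extAdj A v1 j (ahat i) w) :
    w = mid i j := by
  cases w <;> simp_all [extAdj]

lemma eq_ahat_or_eq_base_of_extAdj_mid {i : Fin p} {w : ExtVert V p q}
    (h : extAdj A v1 j (mid i j) w) : w = ahat i ∨ w = base v1 := by
  cases w <;> simp_all [extAdj]

def extSubgraphEmb : A.coe ↪g (extSubgraph (p := p) A hv1 j).coe where
  toFun a := ⟨base a, base_mem_extSubgraph.mpr a.2⟩
  inj' _ _ h := Subtype.ext (base_injective (congrArg Subtype.val h))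
  map_rel_iff' := Iff.rfl

lemma connected_coe_extSubgraph (hA : A.coe.Connected) :
    (extSubgraph (p := p) A hv1 j).coe.Connected := by
  let root : (extSubgraph (p := p) A hv1 j).verts := ⟨base v1, base_mem_extSubgraph.mpr hv1⟩
  have hmid (i : Fin p) : (extSubgraph A hv1 j).coe.Reachable ⟨mid i j, by simp⟩ root :=
    Adj.reachable (show extAdj A v1 j (mid i j) (base v1) from ⟨rfl, rfl⟩)
  have hroot : ∀ x, (extSubgraph A hv1 j).coe.Reachable x root := by
    rintro ⟨x | i | ⟨i, j'⟩, hx⟩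
    · exact (hA.preconnected ⟨x, by simpa using hx⟩ ⟨v1, hv1⟩).map extSubgraphEmb.toHom
    · exact (Adj.reachable (show extAdj A v1 j (ahat i) (mid i j) from ⟨rfl, rfl⟩)).trans
        (hmid i)
    · obtain rfl : j' = j := by simpa using hx
      exact hmid i
  have : Nonempty (extSubgraph (p := p) A hv1 j).verts := ⟨root⟩
  exact .mk fun x y => (hroot x).trans (hroot y).symm

lemma isAcyclic_coe_extSubgraph (hA : A.coe.IsAcyclic) :
    (extSubgraph (p := p) A hv1 j).coe.IsAcyclic := by
  refine IsAcyclic.of_embedding_of_support_subset_range extSubgraphEmb hA fun u c hc => ?_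
  have hahat (i : Fin p) : ⟨ahat i, ahat_mem_extSubgraph⟩ ∉ c.support := fun hx =>
    (hc.ne_and_mem_support hx (y := ⟨mid i j, by simp⟩) (z := ⟨mid i j, by simp⟩)
      fun _ hw => .inl (Subtype.ext (eq_mid_of_extAdj_ahat hw))).1 rfl
  have hmid (i : Fin p) : ⟨mid i j, by simp⟩ ∉ c.support := fun hx =>
    hahat i (hc.ne_and_mem_support hx (y := ⟨ahat i, by simp⟩) (z := ⟨base v1, by simp [hv1]⟩)
      fun _ hw => (eq_ahat_or_eq_base_of_extAdj_mid hw).imp Subtype.ext Subtype.ext).2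
  rintro ⟨x | i | ⟨i, j'⟩, hx⟩ hxc
  · exact ⟨⟨x, by simpa using hx⟩, rfl⟩
  · exact absurd hxc (hahat i)
  · obtain rfl : j' = j := by simpa using hx
    exact absurd hxc (hmid i)

lemma isTree_coe_extSubgraph (hA : A.coe.IsTree) : (extSubgraph (p := p) A hv1 j).coe.IsTree :=
  ⟨connected_coe_extSubgraph hA.connected, isAcyclic_coe_extSubgraph hA.isAcyclic⟩

variable {B : G.Subgraph} {hB : v1 ∈ B.verts} {i : Fin q}

lemma extSubgraph_verts_inter (hij : i ≠ j) :
    (extSubgraph (p := p) A hv1 i).verts ∩ (extSubgraph B hB j).verts =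
      base '' (A.verts ∩ B.verts) ∪ Set.range ahat := by
  ext (x | i' | ⟨i', j'⟩)
  · simp [base_injective.eq_iff]
  · simp
  · simpa using fun h => h ▸ hij

lemma disjoint_edgeSet_extSubgraph (hij : i ≠ j) (h : Disjoint A.edgeSet B.edgeSet) :
    Disjoint (extSubgraph (p := p) A hv1 i).edgeSet (extSubgraph B hB j).edgeSet := by
  refine Set.disjoint_left.mpr fun e he he' => ?_
  induction e using Sym2.ind with
  | _ x y =>
    cases x <;> cases y <;> simp only [Subgraph.mem_edgeSet, extSubgraph, extAdj] at he he'
    case base.base => exact Set.disjoint_left.mp h (A.mem_edgeSet.mpr he) (B.mem_edgeSet.mpr he')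
    all_goals exact hij (he.2.symm.trans he'.2)

theorem IsIDTrees.extend {S : Set V} (hS : v1 ∈ S) {F : Fin q → G.Subgraph}
    (hF : IsIDTrees G S F) :
    IsIDTrees (extGraph G v1 p q) (base '' S ∪ Set.range ahat)
      fun j => extSubgraph (F j) ((hF.1 j).1 hS) j := by
  refine ⟨fun j => ⟨?_, isTree_coe_extSubgraph (hF.1 j).2⟩, fun i j hij => ⟨?_, ?_⟩⟩
  · rintro _ (⟨a, ha, rfl⟩ | ⟨i, rfl⟩)
    · exact base_mem_extSubgraph.mpr ((hF.1 j).1 ha)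
    · exact ahat_mem_extSubgraph
  · rw [extSubgraph_verts_inter hij, (hF.2 i j hij).1]
  · exact disjoint_edgeSet_extSubgraph hij (hF.2 i j hij).2

end Extension

theorem ext_reduction_iff_general {V : Type*} (G : SimpleGraph V) (v1 v2 v3 v4 : V)
    (k1 k2 : ℕ) :
    (∃ F : Fin k2 → (extGraph G v1 (k1 - 4) k2).Subgraph,
        IsIDTrees (extGraph G v1 (k1 - 4) k2) (extS v1 v2 v3 v4 (k1 - 4) k2) F) ↔
      (∃ F : Fin k2 → G.Subgraph, IsIDTrees G ({v1, v2, v3, v4} : Set V) F) := by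
  have hv1 : v1 ∈ ({v1, v2, v3, v4} : Set V) := Set.mem_insert _ _
  constructor
  · rintro ⟨F, hF⟩
    have hS : ExtVert.base ⁻¹' extS v1 v2 v3 v4 (k1 - 4) k2 = {v1, v2, v3, v4} := by
      ext a
      simp [extS, ExtVert.base_injective.eq_iff]
    exact ⟨_, hS ▸ hF.comap_extEmb (Or.inl (Set.mem_image_of_mem _ hv1))⟩
  · rintro ⟨F, hF⟩
    exact ⟨_, hF.extend hv1⟩

/-- With `S = {v₁,v₂,v₃,v₄}` a 4-subset of `V(G)`, `k₁ ≥ 5`, `k₂ ≥ 2`, and `G'`, `S'` as in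
the construction (adding `k₁ - 4` vertices `â^i`, each joined to `v₁` by `k₂` internally
disjoint paths of length two): `κ_{G'}(S') ≥ k₂ ↔ κ_G(S) ≥ k₂`. -/
theorem ext_reduction_iff {V : Type*} (G : SimpleGraph V) (v1 v2 v3 v4 : V)
    (h12 : v1 ≠ v2) (h13 : v1 ≠ v3) (h14 : v1 ≠ v4)
    (h23 : v2 ≠ v3) (h24 : v2 ≠ v4) (h34 : v3 ≠ v4)
    (k1 k2 : ℕ) (hk1 : 5 ≤ k1) (hk2 : 2 ≤ k2) :
    (∃ F : Fin k2 → (extGraph G v1 (k1 - 4) k2).Subgraph,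
        IsIDTrees (extGraph G v1 (k1 - 4) k2) (extS v1 v2 v3 v4 (k1 - 4) k2) F) ↔
      (∃ F : Fin k2 → G.Subgraph, IsIDTrees G ({v1, v2, v3, v4} : Set V) F) :=
  ext_reduction_iff_general G v1 v2 v3 v4 k1 k2
end

section
/- Let G be a graph, let S = {v_1, v_2, v_3, v_4} be a 4-subset of V(G), and let k_1 ≥ 5 and k_2 ≥ 2 be integers. Construct G' from G by adding k_1 − 4 new vertices â^1, …, â^{k_1−4} and, for each 1 ≤ i ≤ k_1 − 4, adding k_2 internally disjoint paths â^i a^i_j v_1 (1 ≤ j ≤ k_2) of length two through new, pairwise distinct vertices a^i_j, and let S' = S ∪ {â^1, …, â^{k_1−4}}. If G' contains k_2 internally disjoint trees connecting S', then G contains k_2 internally disjoint trees connecting S. -/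
/-!
Restrict each tree of `G'` to the vertices of `G`. The new vertices of `G'` hang off `v₁`
only, so collapsing every one of them onto `v₁` sends each edge of a tree either to a
single vertex or to an edge of its restriction; hence the restriction stays connected, and
it stays acyclic as a subgraph of a tree. Intersections and edge sets only shrink, so the
restrictions are again internally disjoint, now connecting `S' ∩ V(G) = S`.
-/

open SimpleGraph

open Function

section General

variable {V W : Type*}

theorem SimpleGraph.Preconnected.of_surjective_of_reachable {G : SimpleGraph V}
    {G' : SimpleGraph W} (hG : G.Preconnected) {g : V → W} (hg : Surjective g)
    (hadj : ∀ ⦃a b⦄, G.Adj a b → G'.Reachable (g a) (g b)) : G'.Preconnected := by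
  intro u v
  obtain ⟨a, rfl⟩ := hg u
  obtain ⟨b, rfl⟩ := hg v
  rw [reachable_iff_reflTransGen]
  exact ((reachable_iff_reflTransGen _ _).1 (hG a b)).lift' g fun a b h =>
    (reachable_iff_reflTransGen _ _).1 (hadj h)

theorem SimpleGraph.Subgraph.isAcyclic_coe_comap_s5 {G : SimpleGraph V} {G' : SimpleGraph W}
    {f : G →g G'} (hf : Injective f) {H : G'.Subgraph} (hH : H.coe.IsAcyclic) :
    (H.comap f).coe.IsAcyclic :=
  hH.comap ⟨fun v => ⟨f v, v.2⟩, fun h => h.2⟩ fun _ _ h =>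
    Subtype.ext (hf (congrArg Subtype.val h))

theorem IsIDTrees.comap {G : SimpleGraph V} {G' : SimpleGraph W} {S' : Set W} {ι : Type*}
    {F' : ι → G'.Subgraph} (hF' : IsIDTrees G' S' F') (f : G →g G')
    (htree : ∀ i, ((F' i).comap f).coe.IsTree) :
    IsIDTrees G (f ⁻¹' S') fun i => (F' i).comap f := by
  refine ⟨fun i => ⟨Set.preimage_mono (hF'.1 i).1, htree i⟩, fun i j hij => ?_⟩
  obtain ⟨hverts, hedges⟩ := hF'.2 i j hij
  refine ⟨by rw [← hverts]; rfl, Set.disjoint_left.2 ?_⟩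
  rintro ⟨a, b⟩ hi hj
  exact Set.disjoint_left.1 hedges (show s(f a, f b) ∈ _ from hi.2)
    (show s(f a, f b) ∈ _ from hj.2)

end General

namespace ExtVert

variable {V : Type*} {p q : ℕ}

def collapse (v1 : V) : ExtVert V p q → V
  | base v => v
  | _ => v1

theorem extGraph_adj_base {G : SimpleGraph V} {v1 v w : V} :
    (extGraph G v1 p q).Adj (base v) (base w) ↔ G.Adj v w := by
  simp only [extGraph, fromRel_adj, extRel, ne_eq, base.injEq]
  exact ⟨fun ⟨_, h⟩ => h.elim id Adj.symm, fun h => ⟨h.ne, .inl h⟩⟩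

def baseEmbedding (G : SimpleGraph V) (v1 : V) (p q : ℕ) : G ↪g extGraph G v1 p q :=
  ⟨⟨base, fun _ _ => base.inj⟩, extGraph_adj_base⟩

theorem collapse_eq_or_eq_base_of_adj {G : SimpleGraph V} {v1 : V} {x y : ExtVert V p q}
    (h : (extGraph G v1 p q).Adj x y) :
    x.collapse v1 = y.collapse v1 ∨ x = base (x.collapse v1) ∧ y = base (y.collapse v1) := by
  simp only [extGraph, fromRel_adj] at h
  cases x <;> cases y <;> simp_all [collapse, extRel, eq_comm]

theorem base_collapse_mem {G : SimpleGraph V} {v1 : V} {H : (extGraph G v1 p q).Subgraph}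
    (hv1 : base v1 ∈ H.verts) {x : ExtVert V p q} (hx : x ∈ H.verts) :
    base (x.collapse v1) ∈ H.verts := by
  cases x <;> assumption

theorem isTree_comap_baseEmbedding {G : SimpleGraph V} {v1 : V}
    {H : (extGraph G v1 p q).Subgraph} (hH : H.coe.IsTree) (hv1 : base v1 ∈ H.verts) :
    (H.comap (baseEmbedding G v1 p q).toHom).coe.IsTree := by
  have : Nonempty (H.comap (baseEmbedding G v1 p q).toHom).verts := ⟨⟨v1, hv1⟩⟩
  refine ⟨⟨?_⟩,
    Subgraph.isAcyclic_coe_comap_s5 (baseEmbedding G v1 p q).injective hH.isAcyclic⟩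
  let g : H.verts → (H.comap (baseEmbedding G v1 p q).toHom).verts :=
    fun x => ⟨x.1.collapse v1, base_collapse_mem hv1 x.2⟩
  refine hH.connected.preconnected.of_surjective_of_reachable (g := g)
    (fun v => ⟨⟨base v.1, v.2⟩, rfl⟩) fun x y hxy => ?_
  rcases collapse_eq_or_eq_base_of_adj (H.adj_sub hxy) with hxy' | ⟨hx, hy⟩
  · exact (Subtype.ext hxy' : g x = g y) ▸ Reachable.refl _
  · have hbase : H.Adj (base (x.1.collapse v1)) (base (y.1.collapse v1)) := by
      rw [← hx, ← hy]
      exact hxy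
    exact Adj.reachable (G := Subgraph.coe _) ⟨extGraph_adj_base.1 (H.adj_sub hbase), hbase⟩

theorem base_preimage_extS (v1 v2 v3 v4 : V) :
    base ⁻¹' extS v1 v2 v3 v4 p q = {v1, v2, v3, v4} := by
  ext v
  simp [extS]

end ExtVert

open ExtVert in
theorem ext_trees_to_trees_general {V : Type*} (G : SimpleGraph V) (v1 v2 v3 v4 : V)
    (k1 k2 : ℕ)
    (F' : Fin k2 → (extGraph G v1 (k1 - 4) k2).Subgraph)
    (hF' : IsIDTrees (extGraph G v1 (k1 - 4) k2) (extS v1 v2 v3 v4 (k1 - 4) k2) F') :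
    ∃ F : Fin k2 → G.Subgraph, IsIDTrees G ({v1, v2, v3, v4} : Set V) F := by
  have hv1 : base v1 ∈ extS v1 v2 v3 v4 (k1 - 4) k2 := .inl ⟨v1, .inl rfl, rfl⟩
  rw [← base_preimage_extS (p := k1 - 4) (q := k2)]
  exact ⟨_, hF'.comap (baseEmbedding G v1 _ _).toHom fun i =>
    isTree_comap_baseEmbedding (hF'.1 i).2 ((hF'.1 i).1 hv1)⟩

/-- If `G'` contains `k₂` internally disjoint trees connecting
`S' = {v₁,v₂,v₃,v₄} ∪ {â^1, …, â^{k₁-4}}`, then `G` contains `k₂` internally disjoint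
trees connecting `S = {v₁,v₂,v₃,v₄}`. -/
theorem ext_trees_to_trees {V : Type*} (G : SimpleGraph V) (v1 v2 v3 v4 : V)
    (h12 : v1 ≠ v2) (h13 : v1 ≠ v3) (h14 : v1 ≠ v4)
    (h23 : v2 ≠ v3) (h24 : v2 ≠ v4) (h34 : v3 ≠ v4)
    (k1 k2 : ℕ) (hk1 : 5 ≤ k1) (hk2 : 2 ≤ k2)
    (F' : Fin k2 → (extGraph G v1 (k1 - 4) k2).Subgraph)
    (hF' : IsIDTrees (extGraph G v1 (k1 - 4) k2) (extS v1 v2 v3 v4 (k1 - 4) k2) F') :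
    ∃ F : Fin k2 → G.Subgraph, IsIDTrees G ({v1, v2, v3, v4} : Set V) F :=
  ext_trees_to_trees_general G v1 v2 v3 v4 k1 k2 F' hF'
end

section
/- Let φ = c_1 ∧ … ∧ c_m be a 3-CNF formula over variables x_1, …, x_n (each clause c_j is a set of three literals, a literal being x_i or its negation x̄_i), with n ≥ 1 and m ≥ 1. Define the graph G_φ with vertex set {x̂_i : 1 ≤ i ≤ n} ∪ {x_i : 1 ≤ i ≤ n} ∪ {x̄_i : 1 ≤ i ≤ n} ∪ {c_j : 1 ≤ j ≤ m} ∪ {a}, and edge set consisting of: x̂_i x_i and x̂_i x̄_i for 1 ≤ i ≤ n; x_i c_j whenever the literal x_i occurs in clause c_j and x̄_i c_j whenever the literal x̄_i occurs in clause c_j; x_1 x_i, x_1 x̄_i, x̄_1 x_i, x̄_1 x̄_i for 2 ≤ i ≤ n; and a x_i, a x̄_i for 1 ≤ i ≤ n and a c_j for 1 ≤ j ≤ m. Let S = {x̂_i : 1 ≤ i ≤ n} ∪ {c_j : 1 ≤ j ≤ m}. Then G_φ contains two internally disjoint trees connecting S (i.e., κ_{G_φ}(S) ≥ 2) if and only if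 φ is satisfiable, i.e., there exists a truth assignment t of the variables x_1, …, x_n under which every clause c_j contains a true literal. -/
/-!
Given a satisfying assignment `t`, take `T₁` on `S` and the true literals, where the true literal
of `x₁` is joined to every other true literal, each `x̂ᵢ` to its true literal and each clause to a
true literal it contains; and `T₂` on `S`, the false literals and `a`, where `a` is joined to every
false literal and every clause and each `x̂ᵢ` to its false literal. Both are trees since every
vertex but the root has a parent of smaller rank, and they are edge-disjoint since they meet only
in the independent set `S`.

Conversely, `a` lies in at most one of two internally disjoint trees; call the other one `H`.
In `H` every clause has a neighbour, necessarily a literal of that clause. In the other tree every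
`x̂ᵢ` has a neighbour, a literal of `xᵢ`, which lies outside `S` and hence outside `H`. So `H`
contains at most one literal of each variable, and making the literals of `H` true satisfies
every clause.
-/

open SimpleGraph

/-- Vertices of the graph `G_φ` built from a 3-CNF formula with `n` variables and `m`
clauses: `xhat i` is `x̂_i`, `lit true i` is the literal `x_i`, `lit false i` is the
literal `x̄_i`, `clause j` is `c_j`, and `a` is the extra vertex. -/
inductive SatVert (n m : ℕ) where
  | xhat (i : Fin n)
  | lit (b : Bool) (i : Fin n)
  | clause (j : Fin m)
  | a

/-- Base adjacency of `G_φ`, where a clause `c j` is the set of its (at most three)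
literals, a literal being a pair `(b, i)` standing for `x_i` if `b = true` and for
`x̄_i` if `b = false`. The vertices `x_1, x̄_1` (index `0`) are joined to all `x_i, x̄_i`
with `i ≥ 2` (index `≠ 0`), and `a` is joined to all literal and clause vertices. -/
def satRel {n m : ℕ} (c : Fin m → Finset (Bool × Fin n)) :
    SatVert n m → SatVert n m → Prop
  | .xhat i, .lit _ i' => i = i'
  | .lit b i, .clause j => (b, i) ∈ c j
  | .lit _ i, .lit _ i' => i.val = 0 ∧ i'.val ≠ 0
  | .a, .lit _ _ => True
  | .a, .clause _ => True
  | _, _ => False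

/-- The graph `G_φ` of the 3-SAT reduction. -/
def satGraph {n m : ℕ} (c : Fin m → Finset (Bool × Fin n)) : SimpleGraph (SatVert n m) :=
  SimpleGraph.fromRel (satRel c)

/-- The set `S = {x̂_i : 1 ≤ i ≤ n} ∪ {c_j : 1 ≤ j ≤ m}`. -/
def satS (n m : ℕ) : Set (SatVert n m) :=
  Set.range SatVert.xhat ∪ Set.range SatVert.clause

namespace SimpleGraph

variable {V : Type*} {G : SimpleGraph V}

theorem isTree_of_adj_iff_parent (r : V) (p : V → V) (f : V → ℕ) (hpr : p r = r)
    (hf : ∀ v, v ≠ r → f (p v) < f v)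
    (hadj : ∀ u v, G.Adj u v ↔ (u ≠ r ∧ v = p u) ∨ (v ≠ r ∧ u = p v)) : G.IsTree := by
  have reach : ∀ v, G.Reachable v r := by
    intro v
    induction h : f v using Nat.strong_induction_on generalizing v with
    | _ k ih =>
      by_cases hv : v = r
      · rw [hv]
      · exact ((hadj _ _).2 (Or.inl ⟨hv, rfl⟩)).reachable.trans (ih _ (h ▸ hf v hv) _ rfl)
  have f_iterate_le : ∀ k w, f (p^[k] w) ≤ f w := by
    intro k
    induction k with
    | zero => simp
    | succ k ih =>
      intro w
      rw [Function.iterate_succ_apply]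
      refine (ih (p w)).trans ?_
      rcases eq_or_ne w r with rfl | hw
      · rw [hpr]
      · exact (hf w hw).le
  -- Without the edge `s(v, p v)`, no walk leaves the descendants of `v`, and `p v` is not one.
  have isBridge : ∀ v, v ≠ r → G.IsBridge s(v, p v) := by
    intro v hv
    rintro ⟨q⟩
    have closed : ∀ {w x} (_ : (G.deleteEdges {s(v, p v)}).Walk w x),
        (∃ k, p^[k] w = v) → ∃ k, p^[k] x = v := by
      intro w x q
      induction q with
      | nil => exact id
      | @cons w x y hwx _ ih =>
        rintro ⟨k, hk⟩
        refine ih ?_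
        rw [deleteEdges_adj, hadj] at hwx
        rcases hwx with ⟨⟨-, rfl⟩ | ⟨-, rfl⟩, hne⟩
        · cases k with
          | zero => exact absurd (by simp [← hk]) hne
          | succ k => exact ⟨k, hk⟩
        · exact ⟨k + 1, hk⟩
    obtain ⟨k, hk⟩ := closed q ⟨0, rfl⟩
    have := f_iterate_le k (p v)
    rw [hk] at this
    exact (hf v hv).not_ge this
  have : Nonempty V := ⟨r⟩
  refine ⟨⟨fun u v => (reach u).trans (reach v).symm⟩, isAcyclic_iff_forall_adj_isBridge.2 ?_⟩
  intro u v huv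
  rcases (hadj u v).1 huv with ⟨hu, rfl⟩ | ⟨hv, rfl⟩
  · exact isBridge u hu
  · exact Sym2.eq_swap ▸ isBridge v hv

namespace Subgraph

def ofParent (W : Set V) (r : V) (p : V → V) (hpW : Set.MapsTo p W W)
    (hadj : ∀ v ∈ W, v ≠ r → G.Adj v (p v)) : G.Subgraph where
  verts := W
  Adj u v := (u ∈ W ∧ u ≠ r ∧ v = p u) ∨ (v ∈ W ∧ v ≠ r ∧ u = p v)
  adj_sub := by
    rintro u v (⟨hu, hur, rfl⟩ | ⟨hv, hvr, rfl⟩)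
    exacts [hadj u hu hur, (hadj v hv hvr).symm]
  edge_vert := by
    rintro u v (⟨hu, -, -⟩ | ⟨hv, -, rfl⟩)
    exacts [hu, hpW hv]
  symm := ⟨fun _ _ => Or.symm⟩

theorem isTree_coe_ofParent {W : Set V} {r : V} {p : V → V} (hpW : Set.MapsTo p W W)
    (hadj : ∀ v ∈ W, v ≠ r → G.Adj v (p v)) (hr : r ∈ W) (hpr : p r = r) (f : V → ℕ)
    (hf : ∀ v ∈ W, v ≠ r → f (p v) < f v) : (ofParent W r p hpW hadj).coe.IsTree :=
  isTree_of_adj_iff_parent ⟨r, hr⟩ (hpW.restrict) (f ∘ Subtype.val) (Subtype.ext hpr)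
    (fun v hv => hf v v.2 (by simpa [Subtype.ext_iff] using hv))
    (by rintro ⟨u, hu : u ∈ W⟩ ⟨v, hv : v ∈ W⟩; simp [ofParent, Subtype.ext_iff, hu, hv])

theorem exists_adj_of_preconnected {H : G.Subgraph} (hH : H.coe.Preconnected) {v w : V}
    (hv : v ∈ H.verts) (hw : w ∈ H.verts) (hvw : v ≠ w) : ∃ x, H.Adj v x := by
  obtain ⟨q⟩ := hH ⟨v, hv⟩ ⟨w, hw⟩
  have hq : ¬q.Nil := Walk.not_nil_of_ne fun h => hvw (congrArg Subtype.val h)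
  exact ⟨q.snd, q.adj_snd hq⟩

theorem disjoint_edgeSet_of_inter_verts_subset {H K : G.Subgraph} {S : Set V}
    (hS : G.IsIndepSet S) (hHK : H.verts ∩ K.verts ⊆ S) : Disjoint H.edgeSet K.edgeSet := by
  refine Set.disjoint_left.2 fun e hH hK => ?_
  induction e using Sym2.ind with
  | _ u v =>
    exact hS (hHK ⟨H.edge_vert hH, K.edge_vert hK⟩)
      (hHK ⟨H.edge_vert hH.symm, K.edge_vert hK.symm⟩) (H.adj_sub hH).ne (H.adj_sub hH)

end Subgraph

end SimpleGraph

theorem exists_isIDTrees_fin_two_iff {V : Type*} {G : SimpleGraph V} {S : Set V} :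
    (∃ F : Fin 2 → G.Subgraph, IsIDTrees G S F) ↔
      ∃ H K : G.Subgraph, (S ⊆ H.verts ∧ H.coe.IsTree) ∧ (S ⊆ K.verts ∧ K.coe.IsTree) ∧
        H.verts ∩ K.verts = S ∧ Disjoint H.edgeSet K.edgeSet := by
  constructor
  · rintro ⟨F, hF, hFF⟩
    exact ⟨F 0, F 1, hF 0, hF 1, hFF 0 1 (by decide)⟩
  · rintro ⟨H, K, hH, hK, hHK, hdisj⟩
    refine ⟨![H, K], Fin.forall_fin_two.2 ⟨hH, hK⟩, ?_⟩
    intro i j hij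
    fin_cases i <;> fin_cases j
    all_goals first
      | exact absurd rfl hij
      | exact ⟨hHK, hdisj⟩
      | exact ⟨Set.inter_comm _ _ ▸ hHK, hdisj.symm⟩

section SatGraph

variable {n m : ℕ} {c : Fin m → Finset (Bool × Fin n)}

theorem a_notMem_satS : (SatVert.a : SatVert n m) ∉ satS n m := by
  simp [satS]

theorem lit_notMem_satS (b : Bool) (i : Fin n) : (SatVert.lit b i : SatVert n m) ∉ satS n m := by
  simp [satS]

theorem satS_isIndepSet : (satGraph c).IsIndepSet (satS n m) := by
  rintro _ (⟨i, rfl⟩ | ⟨j, rfl⟩) _ (⟨i', rfl⟩ | ⟨j', rfl⟩) - <;> simp [satGraph, satRel]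

theorem satGraph_adj_xhat {i : Fin n} {w : SatVert n m} :
    (satGraph c).Adj (.xhat i) w ↔ ∃ b, w = .lit b i := by
  cases w <;> simp [satGraph, satRel, eq_comm]

theorem satGraph_adj_clause {j : Fin m} {w : SatVert n m} (h : (satGraph c).Adj (.clause j) w) :
    w = .a ∨ ∃ l ∈ c j, w = .lit l.1 l.2 := by
  cases w <;> simp_all [satGraph, satRel]

theorem satisfiable_of_trees [NeZero n] {H K : (satGraph c).Subgraph}
    (hH : H.coe.Preconnected) (hK : K.coe.Preconnected) (hSH : satS n m ⊆ H.verts)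
    (hSK : satS n m ⊆ K.verts) (hHK : H.verts ∩ K.verts ⊆ satS n m) (ha : .a ∉ H.verts) :
    ∃ t : Fin n → Bool, ∀ j, ∃ l ∈ c j, t l.2 = l.1 := by
  classical
  refine ⟨fun i => decide (.lit true i ∈ H.verts), fun j => ?_⟩
  have hxhat (i : Fin n) : (.xhat i : SatVert n m) ∈ satS n m := .inl ⟨i, rfl⟩
  have hclause : (.clause j : SatVert n m) ∈ satS n m := .inr ⟨j, rfl⟩
  -- `K` joins `x̂ᵢ` to a literal of `xᵢ`; that literal is outside `S`, hence outside `H`.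
  have not_both (i : Fin n) (htrue : .lit true i ∈ H.verts) (hfalse : .lit false i ∈ H.verts) :
      False := by
    obtain ⟨x, hx⟩ := K.exists_adj_of_preconnected hK (hSK (hxhat i)) (hSK hclause) nofun
    obtain ⟨b, rfl⟩ := satGraph_adj_xhat.1 (K.adj_sub hx)
    refine lit_notMem_satS b i (hHK ⟨?_, K.edge_vert hx.symm⟩)
    cases b <;> assumption
  obtain ⟨x, hx⟩ := H.exists_adj_of_preconnected hH (hSH hclause) (hSH (hxhat 0)) nofun
  rcases satGraph_adj_clause (H.adj_sub hx) with rfl | ⟨⟨b, i⟩, hl, rfl⟩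
  · exact absurd (H.edge_vert hx.symm) ha
  · have hlH : .lit b i ∈ H.verts := H.edge_vert hx.symm
    refine ⟨(b, i), hl, ?_⟩
    cases b
    · simpa using fun htrue => not_both i htrue hlH
    · simpa using hlH

def litsOf (t : Fin n → Bool) : Set (SatVert n m) :=
  Set.range fun i => .lit (t i) i

theorem lit_mem_satS_union_litsOf {t : Fin n → Bool} {b : Bool} {i : Fin n} :
    (.lit b i : SatVert n m) ∈ satS n m ∪ litsOf t ↔ b = t i := by
  simp [satS, litsOf, eq_comm]

def satRank : SatVert n m → ℕ
  | .a => 0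
  | .lit _ i => if i.val = 0 then 1 else 2
  | _ => 3

theorem satRank_lit_lt (b : Bool) (i : Fin n) : satRank (.lit b i : SatVert n m) < 3 := by
  dsimp only [satRank]; split_ifs <;> omega

theorem satRank_lit_pos (b : Bool) (i : Fin n) : 0 < satRank (.lit b i : SatVert n m) := by
  dsimp only [satRank]; split_ifs <;> omega

end SatGraph

section Construction

variable {n m : ℕ} [NeZero n]

def trueParent (t : Fin n → Bool) (σ : Fin m → Fin n) : SatVert n m → SatVert n m
  | .xhat i => .lit (t i) i
  | .clause j => .lit (t (σ j)) (σ j)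
  | _ => .lit (t 0) 0

def falseParent (t : Fin n → Bool) : SatVert n m → SatVert n m
  | .xhat i => .lit (!t i) i
  | _ => .a

def trueTree (c : Fin m → Finset (Bool × Fin n)) (t : Fin n → Bool) (σ : Fin m → Fin n)
    (hσ : ∀ j, (t (σ j), σ j) ∈ c j) : (satGraph c).Subgraph :=
  .ofParent (satS n m ∪ litsOf t) (.lit (t 0) 0) (trueParent t σ)
    (fun v _ => by cases v <;> exact Or.inr ⟨_, rfl⟩)
    (by
      rintro (i | ⟨b, i⟩ | j | -) hv hvr
      · simp [satGraph, satRel, trueParent]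
      · obtain rfl := lit_mem_satS_union_litsOf.1 hv
        have hi : i ≠ 0 := by rintro rfl; exact hvr rfl
        simp [satGraph, satRel, trueParent, hi]
      · simpa [satGraph, satRel, trueParent] using hσ j
      · simp [satS, litsOf] at hv)

theorem isTree_trueTree (c : Fin m → Finset (Bool × Fin n)) (t : Fin n → Bool) (σ : Fin m → Fin n)
    (hσ : ∀ j, (t (σ j), σ j) ∈ c j) : (trueTree c t σ hσ).coe.IsTree := by
  refine Subgraph.isTree_coe_ofParent _ _ (Or.inr ⟨0, rfl⟩) rfl satRank ?_
  rintro (i | ⟨b, i⟩ | j | -) hv hvr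
  · exact satRank_lit_lt _ _
  · obtain rfl := lit_mem_satS_union_litsOf.1 hv
    have hi : i ≠ 0 := by rintro rfl; exact hvr rfl
    simp [satRank, trueParent, hi]
  · exact satRank_lit_lt _ _
  · simp [satS, litsOf] at hv

def falseTree (c : Fin m → Finset (Bool × Fin n)) (t : Fin n → Bool) : (satGraph c).Subgraph :=
  .ofParent (insert .a (satS n m ∪ litsOf fun i => !t i)) .a (falseParent t)
    (fun v _ => by cases v <;> simp [falseParent, litsOf])
    (by
      rintro (i | ⟨b, i⟩ | j | -) - hvr <;> simp_all [satGraph, satRel, falseParent])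

theorem isTree_falseTree (c : Fin m → Finset (Bool × Fin n)) (t : Fin n → Bool) :
    (falseTree c t).coe.IsTree := by
  refine Subgraph.isTree_coe_ofParent _ _ (.inl rfl) rfl satRank ?_
  rintro (i | ⟨b, i⟩ | j | -) - hvr
  · exact satRank_lit_lt _ _
  · exact satRank_lit_pos _ _
  · exact Nat.zero_lt_succ _
  · exact absurd rfl hvr

theorem verts_trueTree_inter_verts_falseTree (c : Fin m → Finset (Bool × Fin n))
    (t : Fin n → Bool) (σ : Fin m → Fin n) (hσ : ∀ j, (t (σ j), σ j) ∈ c j) :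
    (trueTree c t σ hσ).verts ∩ (falseTree c t).verts = satS n m := by
  ext (i | ⟨b, i⟩ | j | -) <;> simp [trueTree, falseTree, Subgraph.ofParent, satS, litsOf]

end Construction

theorem sat_reduction_iff_general (n m : ℕ) (hn : 1 ≤ n)
    (c : Fin m → Finset (Bool × Fin n)) :
    (∃ F : Fin 2 → (satGraph c).Subgraph, IsIDTrees (satGraph c) (satS n m) F) ↔
      (∃ t : Fin n → Bool, ∀ j, ∃ l ∈ c j, t l.2 = l.1) := by
  have : NeZero n := ⟨by omega⟩
  rw [exists_isIDTrees_fin_two_iff]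
  constructor
  · rintro ⟨H, K, ⟨hSH, hH⟩, ⟨hSK, hK⟩, hHK, -⟩
    by_cases ha : SatVert.a ∈ H.verts
    · have haK : SatVert.a ∉ K.verts := fun haK => a_notMem_satS (hHK.le ⟨ha, haK⟩)
      exact satisfiable_of_trees hK.connected.preconnected hH.connected.preconnected hSK hSH
        (Set.inter_comm H.verts K.verts ▸ hHK).le haK
    · exact satisfiable_of_trees hH.connected.preconnected hK.connected.preconnected hSH hSK
        hHK.le ha
  · rintro ⟨t, ht⟩
    choose l hl hlt using ht
    have hσ (j : Fin m) : (t (l j).2, (l j).2) ∈ c j := hlt j ▸ hl j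
    have hST := verts_trueTree_inter_verts_falseTree c t _ hσ
    exact ⟨trueTree c t _ hσ, falseTree c t, ⟨Set.subset_union_left, isTree_trueTree c t _ hσ⟩,
      ⟨fun v hv => Or.inr (Or.inl hv), isTree_falseTree c t⟩, hST,
      Subgraph.disjoint_edgeSet_of_inter_verts_subset satS_isIndepSet hST.le⟩

/-- `κ_{G_φ}(S) ≥ 2` iff the 3-CNF formula `φ` is satisfiable, i.e. there is a truth
assignment `t` under which every clause contains a true literal. -/
theorem sat_reduction_iff (n m : ℕ) (hn : 1 ≤ n) (hm : 1 ≤ m)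
    (c : Fin m → Finset (Bool × Fin n)) (hc : ∀ j, (c j).card = 3) :
    (∃ F : Fin 2 → (satGraph c).Subgraph, IsIDTrees (satGraph c) (satS n m) F) ↔
      (∃ t : Fin n → Bool, ∀ j, ∃ l ∈ c j, t l.2 = l.1) :=
  sat_reduction_iff_general n m hn c
end
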